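/- arXiv:2505.00413 — 4 statements merged into one kernel-verified Lean document; each statement's English description precedes it below -/
import Mathlib

section
/- Let R be a finite group, T ≤ R a subgroup, r = |R| and t = |T|. Then the number of subgroups H of R with T ≤ H ≤ R is at most (r/t)^(log₂(r/t)). -/
/-!
Adjoining to `T` any `x ∈ H \ T` at least halves the index in `H`, so every subgroup `H ≥ T`
is `T ⊔ ⟨g₁, …, g_k⟩` with `k = ⌊log₂ [R:T]⌋`. This join depends only on the cosets `gᵢT`,
so these `H` are indexed by `k`-tuples of cosets, of which there are
`[R:T] ^ k ≤ [R:T] ^ log₂ [R:T]`.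
-/

namespace Subgroup

variable {G : Type*} [Group G]

theorem two_mul_relIndex_le_of_lt {T K H : Subgroup G} (hTK : T < K) (hKH : K ≤ H)
    (hTH : T.relIndex H ≠ 0) : 2 * K.relIndex H ≤ T.relIndex H := by
  rw [← relIndex_mul_relIndex T K H hTK.le hKH]
  have hTK_ne_zero : T.relIndex K ≠ 0 := fun h => hTH (relIndex_eq_zero_of_le_right hKH h)
  have hTK_ne_one : T.relIndex K ≠ 1 := fun h => hTK.not_ge (relIndex_eq_one.1 h)
  exact Nat.mul_le_mul_right _ (by omega)

theorem exists_eq_sup_closure_range_of_log_relIndex_le {T H : Subgroup G} (hTH : T ≤ H)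
    (hfin : T.relIndex H ≠ 0) {k : ℕ} (hk : Nat.log 2 (T.relIndex H) ≤ k) :
    ∃ g : Fin k → G, H = T ⊔ closure (Set.range g) := by
  induction k generalizing T with
  | zero =>
    have h_one : T.relIndex H = 1 := by
      have := Nat.log_eq_zero_iff.1 (Nat.le_zero.1 hk)
      omega
    exact ⟨finZeroElim, by simp [le_antisymm (relIndex_eq_one.1 h_one) hTH]⟩
  | succ k ih =>
    by_cases hHT : H ≤ T
    · exact ⟨1, by simp [le_antisymm hHT hTH]⟩
    obtain ⟨x, hxH, hxT⟩ := SetLike.not_le_iff_exists.1 hHT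
    set K := T ⊔ closure {x}
    have hTK : T < K := lt_of_le_of_ne le_sup_left fun h =>
      hxT (h ▸ mem_sup_right (subset_closure rfl))
    have hKH : K ≤ H := sup_le hTH ((closure_le H).2 (by simpa using hxH))
    have hKH_ne_zero : K.relIndex H ≠ 0 := fun h => hfin (relIndex_eq_zero_of_le_left hTK.le h)
    have hlog : Nat.log 2 (K.relIndex H) ≤ k := by
      have := Nat.log_mono_right (b := 2) (two_mul_relIndex_le_of_lt hTK hKH hfin)
      rw [mul_comm, Nat.log_mul_base one_lt_two hKH_ne_zero] at this
      omega
    obtain ⟨g, rfl⟩ := ih hKH hKH_ne_zero hlog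
    refine ⟨Fin.cons x g, ?_⟩
    rw [Fin.range_cons, Set.insert_eq, closure_union, sup_assoc]

theorem sup_closure_range_le_of_mk_eq {ι : Type*} (T : Subgroup G) {g₁ g₂ : ι → G}
    (h : ∀ i, (g₁ i : G ⧸ T) = g₂ i) :
    T ⊔ closure (Set.range g₁) ≤ T ⊔ closure (Set.range g₂) := by
  refine sup_le le_sup_left ((closure_le _).2 (Set.range_subset_iff.2 fun i => ?_))
  have hmem : g₂ i * ((g₂ i)⁻¹ * g₁ i) ∈ T ⊔ closure (Set.range g₂) :=
    mul_mem (mem_sup_right (subset_closure ⟨i, rfl⟩))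
      (mem_sup_left (QuotientGroup.eq.1 (h i).symm))
  simpa using hmem

theorem ncard_le_index_pow_log (T : Subgroup G) [T.FiniteIndex] :
    {H : Subgroup G | T ≤ H}.ncard ≤ T.index ^ Nat.log 2 T.index := by
  set k := Nat.log 2 T.index
  let f : (Fin k → G ⧸ T) → Subgroup G := fun q => T ⊔ closure (Set.range fun i => (q i).out)
  have hsub : {H : Subgroup G | T ≤ H} ⊆ Set.range f := by
    intro H hTH
    have hrel : T.relIndex H ≤ T.index :=
      Nat.le_of_dvd (Nat.pos_of_ne_zero FiniteIndex.index_ne_zero) (relIndex_dvd_index_of_le hTH)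
    obtain ⟨g, rfl⟩ := exists_eq_sup_closure_range_of_log_relIndex_le hTH
      (fun h => FiniteIndex.index_ne_zero (index_eq_zero_of_relIndex_eq_zero h))
      (Nat.log_mono_right hrel : _ ≤ k)
    have hmk : ∀ i, ((g i : G ⧸ T).out : G ⧸ T) = g i := fun i => QuotientGroup.out_eq' _
    exact ⟨fun i => g i, le_antisymm (sup_closure_range_le_of_mk_eq T hmk)
      (sup_closure_range_le_of_mk_eq T fun i => (hmk i).symm)⟩
  calc {H : Subgroup G | T ≤ H}.ncard ≤ (Set.range f).ncard := Set.ncard_le_ncard hsub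
    _ ≤ Nat.card (Fin k → G ⧸ T) := by
      rw [← Nat.card_coe_set_eq]; exact Finite.card_range_le f
    _ = T.index ^ k := by simp [index, Nat.card_fun]

end Subgroup

/-- The number of subgroups `H` of a finite group `R` containing a subgroup `T` is at most
`[R:T] ^ (log₂ [R:T])`. -/
theorem card_sub_le_index_pow_logb (R : Type*) [Group R] [Finite R] (T : Subgroup R) :
    ({H : Subgroup R | T ≤ H}.ncard : ℝ) ≤ (T.index : ℝ) ^ Real.logb 2 (T.index) := by
  have hindex : (1 : ℝ) ≤ T.index := mod_cast Nat.one_le_iff_ne_zero.2 T.index_ne_zero_of_finite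
  calc ({H : Subgroup R | T ≤ H}.ncard : ℝ) ≤ (T.index : ℝ) ^ Nat.log 2 T.index :=
        mod_cast T.ncard_le_index_pow_log
    _ = (T.index : ℝ) ^ (Nat.log 2 T.index : ℝ) := (Real.rpow_natCast _ _).symm
    _ ≤ (T.index : ℝ) ^ Real.logb 2 T.index :=
        Real.rpow_le_rpow_of_exponent_le hindex (Real.natLog_le_logb _ _)
end

section
/- Let P be a finite p-group and T ≤ P a subgroup of index p^c. Then for every k with 0 ≤ k ≤ c, the number of subgroups H of P with T ≤ H and [P:H] = p^k is at most the Gaussian binomial coefficient binom_p(c, k). -/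
open Finset

/-- The Gaussian binomial coefficient `binom_p(m, r) = ∏_{i=0}^{r-1} (p^{m-i}-1)/(p^{i+1}-1)`. -/
noncomputable def gaussBinom (p m r : ℕ) : ℝ :=
  ∏ i ∈ Finset.range r, ((p : ℝ) ^ (m - i) - 1) / ((p : ℝ) ^ (i + 1) - 1)

/-!
Induct on `|P|`. Pick a normal subgroup `Z` of order `p` and pass to `P ⧸ Z`. If `Z ≤ T`, the
overgroups of `T` are exactly the preimages of the overgroups of `T Z / Z`. Otherwise
`[P : T Z] = p^(c-1)`, and the overgroups `H` of index `p^k` split into those containing `Z`,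
which are at most `binom_p(c-1, k)` by induction, and those meeting `Z` trivially. The latter
are complements of `Z` in `H Z`, and a given `K = H Z` of index `p^(k-1)` has at most
`[K : T Z] = p^(c-k)` complements containing `T`: for `x ∈ K` outside `S Z`, every complement
containing `S` contains one of the at most `p` elements `x w` with `w ∈ Z`, and adjoining `x w`
to `S` divides `[K : S Z]` by at least `p`.
The Pascal rule `binom_p(c, k) = binom_p(c-1, k) + p^(c-k) binom_p(c-1, k-1)` closes the induction.
-/

section GaussBinom

variable {p : ℕ}

@[simp]
lemma gaussBinom_zero_right (m : ℕ) : gaussBinom p m 0 = 1 := by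
  simp [gaussBinom]

lemma gaussBinom_nonneg (hp : 1 ≤ p) (m r : ℕ) : 0 ≤ gaussBinom p m r := by
  have h (j : ℕ) : (0 : ℝ) ≤ (p : ℝ) ^ j - 1 :=
    sub_nonneg.2 (one_le_pow₀ (by exact_mod_cast hp))
  exact prod_nonneg fun i _ => div_nonneg (h _) (h _)

lemma gaussBinom_eq_zero_of_lt {m r : ℕ} (h : m < r) : gaussBinom p m r = 0 :=
  prod_eq_zero (mem_range.2 h) (by simp)

lemma gaussBinom_eq_div (m r : ℕ) : gaussBinom p m r =
    (∏ i ∈ range r, ((p : ℝ) ^ (m - i) - 1)) / ∏ i ∈ range r, ((p : ℝ) ^ (i + 1) - 1) :=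
  prod_div_distrib ..

lemma gaussBinom_succ_succ (hp : 1 < p) (m r : ℕ) :
    gaussBinom p (m + 1) (r + 1) = gaussBinom p m (r + 1) + p ^ (m - r) * gaussBinom p m r := by
  rcases lt_or_ge m r with hmr | hrm
  · rw [gaussBinom_eq_zero_of_lt (by omega), gaussBinom_eq_zero_of_lt (by omega),
      gaussBinom_eq_zero_of_lt hmr, mul_zero, add_zero]
  have hden (i : ℕ) : (p : ℝ) ^ (i + 1) - 1 ≠ 0 :=
    sub_ne_zero.2 (one_lt_pow₀ (by exact_mod_cast hp) i.succ_ne_zero).ne'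
  have hsplit : (p : ℝ) ^ (m + 1) = p ^ (m - r) * p ^ (r + 1) := by
    rw [← pow_add]; congr 1; omega
  rw [gaussBinom_eq_div, gaussBinom_eq_div, gaussBinom_eq_div, prod_range_succ',
    prod_range_succ _ r, prod_range_succ _ r]
  simp only [Nat.add_sub_add_right, Nat.sub_zero, hsplit]
  have := prod_ne_zero_iff.2 fun i (_ : i ∈ range r) => hden i
  have := hden r
  field_simp
  ring

end GaussBinom

lemma Set.ncard_le_ncard_mul_of_subset_biUnion {α ι : Type*} [Finite α] {s : Set α} {t : Set ι}
    {u : ι → Set α} {n : ℕ} (ht : t.Finite) (hs : s ⊆ ⋃ i ∈ t, u i)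
    (hu : ∀ i ∈ t, (u i).ncard ≤ n) : s.ncard ≤ t.ncard * n :=
  calc s.ncard ≤ (⋃ i ∈ ht.toFinset, u i).ncard := Set.ncard_le_ncard (by simpa using hs)
    _ ≤ ∑ i ∈ ht.toFinset, (u i).ncard := Finset.set_ncard_biUnion_le _ _
    _ ≤ ht.toFinset.card * n := Finset.sum_le_card_nsmul _ _ _ (by simpa using hu)
    _ = t.ncard * n := by rw [Set.ncard_eq_toFinset_card t ht]

lemma IsPGroup.mul_relIndex_le {p : ℕ} [Fact p.Prime] {G : Type*} [Group G] [Finite G]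
    (hG : IsPGroup p G) {H K L : Subgroup G} (hHK : H < K) (hKL : K ≤ L) :
    p * K.relIndex L ≤ H.relIndex L := by
  rw [← Subgroup.relIndex_mul_relIndex H K L hHK.le hKL]
  refine Nat.mul_le_mul_right _ ?_
  obtain ⟨n, hn⟩ := (hG.to_subgroup K).index (H.subgroupOf K)
  have hn' : H.relIndex K = p ^ n := hn
  rcases n with _ | n
  · exact absurd (Subgroup.relIndex_eq_one.1 hn') hHK.not_ge
  · exact hn' ▸ Nat.le_self_pow n.succ_ne_zero p

lemma IsPGroup.exists_normal_card_eq {p : ℕ} [Fact p.Prime] {G : Type*} [Group G] [Finite G]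
    [Nontrivial G] (hG : IsPGroup p G) : ∃ Z : Subgroup G, Z.Normal ∧ Nat.card Z = p := by
  have := hG.center_nontrivial
  have hdvd := (hG.to_subgroup (Subgroup.center G)).card_eq_or_dvd.resolve_left
    Finite.one_lt_card.ne'
  obtain ⟨z, hz⟩ := exists_prime_orderOf_dvd_card' p hdvd
  refine ⟨Subgroup.zpowers (z : G), ⟨fun n hn g => ?_⟩, by
    rw [Nat.card_zpowers, Subgroup.orderOf_coe, hz]⟩
  rwa [Subgroup.mem_center_iff.1 (Subgroup.zpowers_le.2 z.2 hn) g, mul_inv_cancel_right]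

namespace Subgroup

variable {G : Type*} [Group G]

def overgroupsOfIndex (T : Subgroup G) (m : ℕ) : Set (Subgroup G) :=
  {H | T ≤ H ∧ H.index = m}

def complementsAbove (Z K S : Subgroup G) : Set (Subgroup G) :=
  {H | S ≤ H ∧ H ⊔ Z = K ∧ H ⊓ Z = ⊥}

lemma overgroupsOfIndex_one (T : Subgroup G) : T.overgroupsOfIndex 1 = {⊤} := by
  ext H
  simp only [overgroupsOfIndex, index_eq_one, Set.mem_ofPred_eq, Set.mem_singleton_iff,
    and_iff_right_iff_imp]
  exact fun h => h ▸ le_top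

lemma le_or_inf_eq_bot_of_card_prime [Finite G] {Z : Subgroup G} (hZ : (Nat.card Z).Prime)
    (H : Subgroup G) : Z ≤ H ∨ H ⊓ Z = ⊥ := by
  rcases hZ.eq_one_or_self_of_dvd _ (card_dvd_of_le (inf_le_right : H ⊓ Z ≤ Z)) with h | h
  · exact .inr (card_eq_one.1 h)
  · exact .inl (inf_eq_right.1 (eq_of_le_of_card_ge inf_le_right h.ge))

lemma index_map_mk' (T N : Subgroup G) [N.Normal] :
    (T.map (QuotientGroup.mk' N)).index = (T ⊔ N).index := by
  rw [index_map, QuotientGroup.ker_mk', MonoidHom.range_eq_top.2 (QuotientGroup.mk'_surjective N),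
    index_top, mul_one]

variable {Z : Subgroup G} [Z.Normal]

lemma card_mul_index_sup_of_inf_eq_bot [Finite G] {T : Subgroup G} (h : T ⊓ Z = ⊥) :
    Nat.card Z * (T ⊔ Z).index = T.index := by
  rw [← relIndex_mul_index (le_sup_left : T ≤ T ⊔ Z)]
  congr 1
  have hZ : Z.relIndex (T ⊔ Z) = Nat.card T := by
    rw [relIndex_sup_right, ← inf_relIndex_right, inf_comm, h, relIndex_bot_left]
  have h₁ := relIndex_mul_relIndex ⊥ T (T ⊔ Z) bot_le le_sup_left
  have h₂ := relIndex_mul_relIndex ⊥ Z (T ⊔ Z) bot_le le_sup_right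
  rw [relIndex_bot_left, relIndex_bot_left] at h₁ h₂
  rw [← h₂, hZ, mul_comm (Nat.card Z)] at h₁
  exact (Nat.eq_of_mul_eq_mul_left Nat.card_pos h₁).symm

lemma exists_index_sup_eq_pow [Finite G] {p : ℕ} (hp : 1 < p) (hZ : Nat.card Z = p)
    {T : Subgroup G} {c : ℕ} (hT : T.index = p ^ c) (h : T ⊓ Z = ⊥) :
    ∃ c', c = c' + 1 ∧ (T ⊔ Z).index = p ^ c' := by
  have hindex := card_mul_index_sup_of_inf_eq_bot h
  rw [hZ, hT] at hindex
  rcases c with _ | c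
  · exact absurd (Nat.eq_one_of_mul_eq_one_right (hindex.trans (pow_zero p))) hp.ne'
  exact ⟨c, rfl, Nat.eq_of_mul_eq_mul_left (by omega) (hindex.trans (pow_succ' p c))⟩

lemma exists_mul_mem_of_mem_sup {H : Subgroup G} {x : G} (hx : x ∈ H ⊔ Z) :
    ∃ w ∈ Z, x * w ∈ H := by
  obtain ⟨y, hy, w, hw, rfl⟩ := mem_sup_of_normal_right.1 hx
  exact ⟨w⁻¹, inv_mem hw, by simpa⟩

lemma eq_of_le_of_sup_eq_of_inf_eq_bot {S H : Subgroup G} (hSH : S ≤ H) (hsup : S ⊔ Z = H ⊔ Z)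
    (hinf : H ⊓ Z = ⊥) : S = H := by
  refine le_antisymm hSH fun h hh => ?_
  obtain ⟨w, hw, hhw⟩ := exists_mul_mem_of_mem_sup (hsup ▸ mem_sup_left hh : h ∈ S ⊔ Z)
  have : w = 1 := by
    rw [← mem_bot, ← hinf]
    exact ⟨by simpa using H.mul_mem (H.inv_mem hh) (hSH hhw), hw⟩
  simpa [this] using hhw

theorem ncard_complementsAbove_le {p : ℕ} [Fact p.Prime] [Finite G] (hG : IsPGroup p G)
    (hZ : Nat.card Z ≤ p) (K S : Subgroup G) :
    (complementsAbove Z K S).ncard ≤ (S ⊔ Z).relIndex K := by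
  induction S using WellFoundedGT.induction with
  | _ S IH =>
  rcases (complementsAbove Z K S).eq_empty_or_nonempty with hempty | ⟨H₀, hSH₀, hH₀K, -⟩
  · simp [hempty]
  rcases (hH₀K ▸ sup_le_sup_right hSH₀ Z : S ⊔ Z ≤ K).eq_or_lt with hSZK | hSZK
  · have hsub : complementsAbove Z K S ⊆ {S} := fun H ⟨hSH, hHK, hHZ⟩ =>
      (eq_of_le_of_sup_eq_of_inf_eq_bot hSH (hSZK.trans hHK.symm) hHZ).symm
    simpa [hSZK] using Set.ncard_le_ncard hsub
  obtain ⟨x, hxK, hxSZ⟩ := SetLike.exists_of_lt hSZK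
  have hsub : complementsAbove Z K S ⊆
      ⋃ w ∈ (Z : Set G), complementsAbove Z K (S ⊔ zpowers (x * w)) := by
    rintro H ⟨hSH, hHK, hHZ⟩
    obtain ⟨w, hw, hxwH⟩ := exists_mul_mem_of_mem_sup (hHK ▸ hxK)
    exact Set.mem_biUnion hw ⟨sup_le hSH (zpowers_le.2 hxwH), hHK, hHZ⟩
  have hstep (w : G) (hw : w ∈ Z) :
      (complementsAbove Z K (S ⊔ zpowers (x * w))).ncard ≤ (S ⊔ Z).relIndex K / p := by
    have hxw : x * w ∉ S ⊔ Z := fun h =>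
      hxSZ (by simpa using mul_mem h (mem_sup_right (inv_mem hw)))
    have hS : S < S ⊔ zpowers (x * w) :=
      left_lt_sup.2 fun h => hxw (mem_sup_left (h (mem_zpowers _)))
    have hlt : S ⊔ Z < S ⊔ zpowers (x * w) ⊔ Z :=
      SetLike.lt_iff_le_and_exists.2 ⟨sup_le_sup_right le_sup_left Z,
        x * w, mem_sup_left (mem_sup_right (mem_zpowers _)), hxw⟩
    have hZK : Z ≤ K := le_sup_right.trans hSZK.le
    have hle : S ⊔ zpowers (x * w) ⊔ Z ≤ K :=
      sup_le (sup_le (le_sup_left.trans hSZK.le) (zpowers_le.2 (K.mul_mem hxK (hZK hw)))) hZK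
    rw [Nat.le_div_iff_mul_le (Fact.out : p.Prime).pos, mul_comm]
    exact (Nat.mul_le_mul_left p (IH _ hS)).trans (hG.mul_relIndex_le hlt hle)
  calc (complementsAbove Z K S).ncard ≤ (Z : Set G).ncard * ((S ⊔ Z).relIndex K / p) :=
        Set.ncard_le_ncard_mul_of_subset_biUnion (Set.toFinite _) hsub hstep
    _ ≤ p * ((S ⊔ Z).relIndex K / p) :=
        Nat.mul_le_mul_right _ (by rwa [← Nat.card_coe_set_eq])
    _ ≤ (S ⊔ Z).relIndex K := Nat.mul_div_le _ _

lemma ncard_overgroupsOfIndex_inter_le [Finite G] (T : Subgroup G) (m : ℕ) :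
    (T.overgroupsOfIndex m ∩ {H | Z ≤ H}).ncard ≤
      ((T.map (QuotientGroup.mk' Z)).overgroupsOfIndex m).ncard := by
  refine Set.ncard_le_ncard_of_injOn (map (QuotientGroup.mk' Z)) ?_ ?_
  · rintro H ⟨⟨hTH, hH⟩, hZH⟩
    exact ⟨map_mono hTH, by rw [index_map_mk', sup_eq_left.2 hZH, hH]⟩
  · rintro H₁ ⟨-, hZH₁⟩ H₂ ⟨-, hZH₂⟩ h
    exact map_injective_of_ker_le _ (by rwa [QuotientGroup.ker_mk'])
      (by rwa [QuotientGroup.ker_mk']) h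

lemma ncard_overgroupsOfIndex_diff_le {p : ℕ} [Fact p.Prime] [Finite G] (hG : IsPGroup p G)
    (hZ : Nat.card Z = p) {T : Subgroup G} {c : ℕ} (hTZ : (T ⊔ Z).index = p ^ c) (k : ℕ) :
    (T.overgroupsOfIndex (p ^ (k + 1)) \ {H | Z ≤ H}).ncard ≤
      ((T.map (QuotientGroup.mk' Z)).overgroupsOfIndex (p ^ k)).ncard * p ^ (c - k) := by
  have hp : p.Prime := Fact.out
  set π := QuotientGroup.mk' Z
  refine Set.ncard_le_ncard_mul_of_subset_biUnion (u := fun K => complementsAbove Z (K.comap π) T)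
    (Set.toFinite _) ?_ ?_
  · rintro H ⟨⟨hTH, hH⟩, hZH⟩
    have hHZ : H ⊓ Z = ⊥ := (le_or_inf_eq_bot_of_card_prime (hZ ▸ hp) H).resolve_left hZH
    obtain ⟨_, hkk, hHZk⟩ := exists_index_sup_eq_pow hp.one_lt hZ hH hHZ
    rw [← Nat.succ_injective hkk] at hHZk
    refine Set.mem_biUnion (x := H.map π) ⟨map_mono hTH, ?_⟩ ⟨hTH, ?_, hHZ⟩
    · rw [index_map_mk', hHZk]
    · rw [comap_map_eq, QuotientGroup.ker_mk']
  · rintro K ⟨hTK, hK⟩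
    refine (ncard_complementsAbove_le hG hZ.le _ _).trans_eq ?_
    have hle : T ⊔ Z ≤ K.comap π :=
      sup_le (map_le_iff_le_comap.1 hTK) ((QuotientGroup.ker_mk' Z).ge.trans (ker_le_comap π K))
    have hrel := relIndex_mul_index hle
    rw [index_comap_of_surjective K (QuotientGroup.mk'_surjective Z), hK, hTZ] at hrel
    have hkc : k ≤ c := (Nat.pow_dvd_pow_iff_le_right hp.one_lt).1 (Dvd.intro_left _ hrel)
    rw [← Nat.pow_div hkc hp.pos, ← hrel, Nat.mul_div_cancel _ (pow_pos hp.pos k)]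

lemma ncard_overgroupsOfIndex_succ_le {p : ℕ} [Fact p.Prime] [Finite G] (hG : IsPGroup p G)
    (hZ : Nat.card Z = p) {T : Subgroup G} {c : ℕ} (hTZ : (T ⊔ Z).index = p ^ c) (k : ℕ) :
    (T.overgroupsOfIndex (p ^ (k + 1))).ncard ≤
      ((T.map (QuotientGroup.mk' Z)).overgroupsOfIndex (p ^ (k + 1))).ncard +
      ((T.map (QuotientGroup.mk' Z)).overgroupsOfIndex (p ^ k)).ncard * p ^ (c - k) := by
  rw [← Set.ncard_inter_add_ncard_sdiff_eq_ncard _ {H | Z ≤ H}]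
  exact add_le_add (ncard_overgroupsOfIndex_inter_le T _)
    (ncard_overgroupsOfIndex_diff_le hG hZ hTZ k)

end Subgroup

open Subgroup in
theorem card_sub_index_le_gaussBinom_general (p : ℕ) (hp : p.Prime) (P : Type*) [Group P] [Finite P]
    (hP : IsPGroup p P) (T : Subgroup P) (c k : ℕ) (hT : T.index = p ^ c) :
    ({H : Subgroup P | T ≤ H ∧ H.index = p ^ k}.ncard : ℝ) ≤ gaussBinom p c k := by
  have := Fact.mk hp
  change ((T.overgroupsOfIndex (p ^ k)).ncard : ℝ) ≤ _
  induction hn : Nat.card P using Nat.strong_induction_on generalizing P T c k with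
  | _ n IH =>
  rcases k with _ | k
  · simp [overgroupsOfIndex_one]
  rcases subsingleton_or_nontrivial P with hP1 | hP1
  · have : T.overgroupsOfIndex (p ^ (k + 1)) = ∅ := Set.eq_empty_of_forall_notMem fun H hH =>
      (Nat.one_lt_pow k.succ_ne_zero hp.one_lt).ne'
        (hH.2.symm.trans (index_eq_one.2 (Subsingleton.elim H ⊤)))
    simpa [this] using gaussBinom_nonneg hp.one_lt.le c (k + 1)
  obtain ⟨Z, hZ, hZp⟩ := hP.exists_normal_card_eq
  have hQ : Nat.card (P ⧸ Z) < n := by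
    rw [← hn, card_eq_card_quotient_mul_card_subgroup Z, hZp]
    exact lt_mul_right Nat.card_pos hp.one_lt
  have IHQ (T' : Subgroup (P ⧸ Z)) (c' k' : ℕ) (hT' : T'.index = p ^ c') :=
    IH _ hQ (P ⧸ Z) (hP.to_quotient Z) T' c' k' hT' rfl
  rcases le_or_inf_eq_bot_of_card_prime (hZp ▸ hp) T with hZT | hZT
  · rw [← Set.inter_eq_left.2 (show T.overgroupsOfIndex (p ^ (k + 1)) ⊆ {H | Z ≤ H} from
      fun H hH => hZT.trans hH.1)]
    exact (Nat.cast_le.2 (ncard_overgroupsOfIndex_inter_le T _)).trans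
      (IHQ _ c _ (by rw [index_map_mk', sup_eq_left.2 hZT, hT]))
  obtain ⟨c, rfl, hTZ⟩ := exists_index_sup_eq_pow hp.one_lt hZp hT hZT
  have hTZ' : (T.map (QuotientGroup.mk' Z)).index = p ^ c := by rw [index_map_mk', hTZ]
  calc _ ≤ (((T.map (QuotientGroup.mk' Z)).overgroupsOfIndex (p ^ (k + 1))).ncard +
        ((T.map (QuotientGroup.mk' Z)).overgroupsOfIndex (p ^ k)).ncard * p ^ (c - k) : ℝ) := by
        exact_mod_cast ncard_overgroupsOfIndex_succ_le hP hZp hTZ k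
    _ ≤ gaussBinom p c (k + 1) + gaussBinom p c k * p ^ (c - k) := by
        gcongr <;> exact IHQ _ _ _ hTZ'
    _ = gaussBinom p (c + 1) (k + 1) := by rw [gaussBinom_succ_succ hp.one_lt, mul_comm]

/-- In a finite `p`-group `P` with `T ≤ P` of index `p^c`, the number of subgroups containing
`T` of index `p^k` is at most the Gaussian binomial `binom_p(c, k)`. -/
theorem card_sub_index_le_gaussBinom (p : ℕ) (hp : p.Prime) (P : Type*) [Group P] [Finite P]
    (hP : IsPGroup p P) (T : Subgroup P) (c k : ℕ) (hT : T.index = p ^ c) (hk : k ≤ c) :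
    ({H : Subgroup P | T ≤ H ∧ H.index = p ^ k}.ncard : ℝ) ≤ gaussBinom p c k :=
  card_sub_index_le_gaussBinom_general p hp P hP T c k hT
end

section
/- Let R be a finite group, T ≤ R, and p a prime. Let Syl_p(R,T) be the set of p-Sylow subgroups P of R with T ∩ P ∈ Syl_p(T), on which T acts by conjugation. Then the number of T-orbits on Syl_p(R,T) is at most [R:T]/p^c, where p^c is the largest power of p dividing [R:T]. -/
/-!
Fix a Sylow subgroup `P` of `R` and send a coset `x T` to the `T`-orbit of `x⁻¹ • P`. This map is
constant on `P`-orbits in `R ⧸ T`. If `Q = x • P` lies in `Syl_p(R,T)`, the stabilizer of `x⁻¹ T`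
in `P` is conjugate to `Q ∩ T`, a Sylow subgroup of `T`, so the `P`-orbit of `x⁻¹ T` has exactly
`p ^ c` elements. Hence every `T`-orbit in `Syl_p(R,T)` has a fibre of size at least `p ^ c`, and
the fibres are disjoint subsets of `R ⧸ T`.
-/

open MulAction Pointwise

lemma Set.ncard_mul_le_card_of_le_card_preimage {α β : Type*} [Finite α] (f : α → β) {s : Set β}
    {n : ℕ} (h : ∀ b ∈ s, n ≤ Nat.card (f ⁻¹' {b})) : s.ncard * n ≤ Nat.card α := by
  classical
  cases nonempty_fintype α
  by_cases hs : s.Finite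
  · rw [Set.ncard_eq_toFinset_card s hs, mul_comm, Nat.card_eq_fintype_card, ← Finset.card_univ]
    refine le_trans (Finset.mul_card_image_le_card_of_maps_to (f := f) (s := {a | f a ∈ s})
      (by simp) n fun b hb => ?_) (Finset.card_le_univ _)
    rw [Set.Finite.mem_toFinset] at hb
    convert h b hb using 1
    rw [← Nat.card_eq_finsetCard]
    refine Nat.card_congr (Equiv.subtypeEquivRight fun a => ?_)
    simp only [Finset.mem_filter, Finset.mem_univ, true_and, Set.mem_preimage,
      Set.mem_singleton_iff]
    exact and_iff_right_of_imp fun hab => hab ▸ hb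
  · simp [Set.Infinite.ncard hs]

section

variable {R α : Type*} [Group R] [MulAction R α]

namespace Subgroup

lemma card_subgroupOf (H K : Subgroup R) : Nat.card (H.subgroupOf K) = Nat.card ↥(H ⊓ K) := by
  rw [← subgroupOf_map_subtype, card_subtype]

lemma factorization_card_eq_add [Finite R] (T : Subgroup R) (p : ℕ) :
    (Nat.card R).factorization p = (Nat.card T).factorization p + T.index.factorization p := by
  rw [← T.card_mul_index, Nat.factorization_mul Nat.card_pos.ne' T.index_ne_zero_of_finite,
    Finsupp.add_apply]

lemma stabilizer_coe_quotient (P T : Subgroup R) (x : R) :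
    stabilizer P (x : R ⧸ T) = (MulAut.conj x • T).subgroupOf P := by
  ext u
  rw [mem_stabilizer_iff, mem_subgroupOf, mem_pointwise_smul_iff_inv_smul_mem]
  change ((u * x : R) : R ⧸ T) = x ↔ _
  rw [QuotientGroup.eq, ← inv_mem_iff]
  simp [mul_assoc]

lemma card_stabilizer_coe_quotient (P T : Subgroup R) (x : R) :
    Nat.card (stabilizer P (x : R ⧸ T)) = Nat.card ((MulAut.conj x⁻¹ • P).subgroupOf T) := by
  rw [stabilizer_coe_quotient, card_subgroupOf, card_subgroupOf,
    Nat.card_congr (equivSMul (MulAut.conj x) (MulAut.conj x⁻¹ • P ⊓ T)).toEquiv,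
    smul_inf, inf_comm, smul_smul]
  simp

end Subgroup

lemma Sylow.card_orbit_coe_quotient [Finite R] {p : ℕ} [Fact p.Prime] (P : Sylow p R)
    {T : Subgroup R} {x : R} (S : Sylow p T)
    (hS : (S : Subgroup T) = ((x • P : Sylow p R) : Subgroup R).subgroupOf T) :
    Nat.card (orbit (P : Subgroup R) ((x⁻¹ : R) : R ⧸ T)) = p ^ T.index.factorization p := by
  have horbit_stabilizer := (stabilizer (P : Subgroup R) ((x⁻¹ : R) : R ⧸ T)).index_mul_card
  rw [index_stabilizer, ← Nat.card_coe_set_eq, Subgroup.card_stabilizer_coe_quotient, inv_inv,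
    ← Sylow.coe_subgroup_smul, ← hS, S.card_eq_multiplicity, P.card_eq_multiplicity,
    T.factorization_card_eq_add, pow_add, mul_comm (p ^ _)] at horbit_stabilizer
  exact Nat.eq_of_mul_eq_mul_right (pow_pos (Fact.out : p.Prime).pos _) horbit_stabilizer

def cosetOrbit (T : Subgroup R) (a : α) : R ⧸ T → Set α :=
  Quotient.lift (fun x => orbit T (x⁻¹ • a)) fun x y hxy => by
    have hyx : y⁻¹ * x ∈ T := by simpa using T.inv_mem (QuotientGroup.leftRel_apply.mp hxy)
    rw [← orbit_smul (⟨y⁻¹ * x, hyx⟩ : T), Subgroup.mk_smul, smul_smul, mul_inv_cancel_right]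

@[simp]
lemma cosetOrbit_mk (T : Subgroup R) (a : α) (x : R) :
    cosetOrbit T a x = orbit T (x⁻¹ • a) :=
  rfl

lemma orbit_subset_preimage_cosetOrbit (T : Subgroup R) {a : α}
    {H : Subgroup R} (hH : H ≤ stabilizer R a) (y : R ⧸ T) :
    orbit H y ⊆ cosetOrbit T a ⁻¹' {cosetOrbit T a y} := by
  rintro _ ⟨u, rfl⟩
  induction y using QuotientGroup.induction_on with | H x => ?_
  change cosetOrbit T a ((u * x : R) : R ⧸ T) = _
  rw [cosetOrbit_mk, cosetOrbit_mk, mul_inv_rev, mul_smul, inv_smul_eq_iff.mpr (hH u.2).symm]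

end

/-- Let `T ≤ R` with `R` finite and `p` prime. On the set `Syl_p(R,T)` of `p`-Sylow subgroups
`Q` of `R` with `T ∩ Q ∈ Syl_p(T)`, the subgroup `T` acts by conjugation, and the number of
`T`-orbits is at most `[R:T] / p^c`, where `p^c` is the `p`-part of `[R:T]`. -/
theorem card_orbits_sylow_le (p : ℕ) [Fact p.Prime] (R : Type*) [Group R] [Finite R]
    (T : Subgroup R) :
    ({O : Set (Sylow p R) | ∃ Q : Sylow p R,
        (∃ S : Sylow p T, (S : Subgroup T) = (Q : Subgroup R).subgroupOf T) ∧
        O = MulAction.orbit T Q}.ncard) * p ^ (T.index.factorization p) ≤ T.index := by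
  obtain ⟨P⟩ : Nonempty (Sylow p R) := inferInstance
  refine Set.ncard_mul_le_card_of_le_card_preimage (cosetOrbit T P) ?_
  rintro _ ⟨Q, ⟨S, hS⟩, rfl⟩
  obtain ⟨x, rfl⟩ := exists_smul_eq R P Q
  have hP : (P : Subgroup R) ≤ stabilizer R P :=
    P.stabilizer_eq_normalizer ▸ Subgroup.le_normalizer
  have hsub := orbit_subset_preimage_cosetOrbit T hP ((x⁻¹ : R) : R ⧸ T)
  rw [cosetOrbit_mk, inv_inv] at hsub
  calc p ^ T.index.factorization p
      = Nat.card (orbit (P : Subgroup R) ((x⁻¹ : R) : R ⧸ T)) :=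
        (P.card_orbit_coe_quotient S hS).symm
    _ ≤ Nat.card (cosetOrbit T P ⁻¹' {orbit T (x • P)}) := Nat.card_mono (Set.toFinite _) hsub
end

section
/- For every prime p and every integer a ≥ 0, the sum of Gaussian binomial coefficients satisfies ∑_{k=0}^{a} binom_p(a,k) ≤ S(p,a), where S(p,a) is defined piecewise: S(p,1)=2, S(p,2)=p+3, S(p,3)=2p²+2p+4, S(p,4)=p⁴+3p³+4p²+3p+5, S(p,5)=2p⁶+2p⁵+6p⁴+6p³+6p²+4p+6, and S(p,a)=c(p)·p^{a²/2} for a ≥ 6, with c(p)=2.129·∏_{i≥1}(1−p^{−i})^{−1}. -/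
open Finset


/-- The Euler-type product `C(p) = ∏_{i ≥ 1} (1 - p^{-i})⁻¹`. -/
noncomputable def Cprod (p : ℕ) : ℝ := ∏' i : ℕ, (1 - ((p : ℝ) ^ (i + 1))⁻¹)⁻¹

/-- The explicit bounding function `S(p,a)` of Spiga, with `S(p,a) = c(p)·p^{a²/2}` for
`a ≥ 6`, where `c(p) = 2.129·C(p)`. -/
noncomputable def Sfun (p a : ℕ) : ℝ :=
  if a = 1 then 2
  else if a = 2 then (p : ℝ) + 3
  else if a = 3 then 2 * (p : ℝ) ^ 2 + 2 * p + 4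
  else if a = 4 then (p : ℝ) ^ 4 + 3 * (p : ℝ) ^ 3 + 4 * (p : ℝ) ^ 2 + 3 * p + 5
  else if a = 5 then
    2 * (p : ℝ) ^ 6 + 2 * (p : ℝ) ^ 5 + 6 * (p : ℝ) ^ 4 + 6 * (p : ℝ) ^ 3
      + 6 * (p : ℝ) ^ 2 + 4 * p + 6
  else 2.129 * Cprod p * (p : ℝ) ^ ((a : ℝ) ^ 2 / 2)

/-!
Each factor of `binom_p(a,k)` is at most `p^(a-2i)`, so `binom_p(a,k) ≤ p^(k(a+1-k)) ≤ p^((a+1)²/4)`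
and the sum is at most `(a+1)·p^((a+1)²/4)`. For `a ≥ 6` the spare factor `p^((a²-2a-1)/4)`
between this and `p^(a²/2)` is at least `p^(a-1) ≥ (a+1)/2`, so the sum is at most `2·p^(a²/2)`,
and `2 ≤ c(p)` because every factor of `C(p)` is at least `1`. For `1 ≤ a ≤ 5`, `S(p,a)` is the sum
itself, written out as a polynomial in `p`; for `a = 0` the sum is `1 < c(p)`.
-/

lemma one_le_tprod_of_one_le {ι : Type*} {f : ι → ℝ} (h : ∀ i, 1 ≤ f i) : 1 ≤ ∏' i, f i := by
  by_cases hf : Multipliable f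
  · exact le_hasProd_of_le_prod hf.hasProd fun s ↦ one_le_prod fun i _ ↦ h i
  · rw [tprod_eq_one_of_not_multipliable hf]

lemma one_le_Cprod {p : ℕ} (hp : 1 < p) : 1 ≤ Cprod p := by
  refine one_le_tprod_of_one_le fun i ↦ ?_
  have hpow : (1 : ℝ) < (p : ℝ) ^ (i + 1) := one_lt_pow₀ (by exact_mod_cast hp) i.succ_ne_zero
  have hinv_pos : 0 < ((p : ℝ) ^ (i + 1))⁻¹ := by positivity
  have hinv_lt : ((p : ℝ) ^ (i + 1))⁻¹ < 1 := inv_lt_one_of_one_lt₀ hpow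
  exact (one_le_inv₀ (by linarith)).mpr (by linarith)

lemma sum_range_sub_two_mul (a k : ℕ) :
    ∑ i ∈ range k, ((a : ℝ) - 2 * i) = k * ((a : ℝ) + 1 - k) := by
  induction k with
  | zero => simp
  | succ n ih => rw [sum_range_succ, ih]; push_cast; ring

lemma gaussBinom_factor_le {p : ℕ} (hp : 1 < p) {a i : ℕ} (hi : i ≤ a) :
    ((p : ℝ) ^ (a - i) - 1) / ((p : ℝ) ^ (i + 1) - 1) ≤ (p : ℝ) ^ ((a : ℝ) - 2 * i) := by
  have hp2 : (2 : ℝ) ≤ p := by exact_mod_cast hp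
  have hden : (p : ℝ) ^ i ≤ (p : ℝ) ^ (i + 1) - 1 := by
    rw [pow_succ]; nlinarith [one_le_pow₀ (n := i) (by linarith : (1 : ℝ) ≤ p)]
  calc ((p : ℝ) ^ (a - i) - 1) / ((p : ℝ) ^ (i + 1) - 1)
      ≤ (p : ℝ) ^ (a - i) / (p : ℝ) ^ i :=
        div_le_div₀ (by positivity) (by linarith) (by positivity) hden
    _ = (p : ℝ) ^ ((a : ℝ) - 2 * i) := by
      rw [← Real.rpow_natCast, ← Real.rpow_natCast, ← Real.rpow_sub (by positivity),
        Nat.cast_sub hi]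
      ring_nf

lemma gaussBinom_le_rpow {p : ℕ} (hp : 1 < p) {a k : ℕ} (hk : k ≤ a) :
    gaussBinom p a k ≤ (p : ℝ) ^ ((k : ℝ) * ((a : ℝ) + 1 - k)) := by
  have hp1 : (1 : ℝ) < p := by exact_mod_cast hp
  rw [← sum_range_sub_two_mul, Real.rpow_sum_of_pos (by positivity), gaussBinom]
  refine prod_le_prod (fun i _ ↦ div_nonneg ?_ ?_) fun i hi ↦ gaussBinom_factor_le hp ?_
  · linarith [one_le_pow₀ (n := a - i) hp1.le]
  · linarith [one_le_pow₀ (n := i + 1) hp1.le]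
  · linarith [mem_range.mp hi]

lemma sum_gaussBinom_le_succ_mul_rpow {p : ℕ} (hp : 1 < p) (a : ℕ) :
    ∑ k ∈ range (a + 1), gaussBinom p a k
      ≤ ((a : ℝ) + 1) * (p : ℝ) ^ (((a : ℝ) + 1) ^ 2 / 4) := by
  have hp1 : (1 : ℝ) < p := by exact_mod_cast hp
  have hterm : ∀ k ∈ range (a + 1), gaussBinom p a k ≤ (p : ℝ) ^ (((a : ℝ) + 1) ^ 2 / 4) := by
    intro k hk
    refine (gaussBinom_le_rpow hp (Nat.lt_succ_iff.mp (mem_range.mp hk))).trans ?_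
    exact Real.rpow_le_rpow_of_exponent_le hp1.le (by nlinarith [sq_nonneg ((a : ℝ) + 1 - 2 * k)])
  simpa using sum_le_card_nsmul _ _ _ hterm

lemma succ_le_two_mul_pow_pred {p : ℕ} (hp : 1 < p) (a : ℕ) : a + 1 ≤ 2 * p ^ (a - 1) := by
  rcases a with _ | n
  · simp
  · calc n + 1 + 1 ≤ 2 ^ (n + 1) := Nat.lt_two_pow_self
      _ = 2 * 2 ^ n := pow_succ' 2 n
      _ ≤ 2 * p ^ n := by gcongr; omega

lemma succ_mul_rpow_le_two_mul_rpow {p : ℕ} (hp : 1 < p) {a : ℕ} (ha : 6 ≤ a) :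
    ((a : ℝ) + 1) * (p : ℝ) ^ (((a : ℝ) + 1) ^ 2 / 4) ≤ 2 * (p : ℝ) ^ ((a : ℝ) ^ 2 / 2) := by
  have hp1 : (1 : ℝ) < p := by exact_mod_cast hp
  have hsplit : (p : ℝ) ^ ((a : ℝ) ^ 2 / 2)
      = (p : ℝ) ^ (((a : ℝ) ^ 2 - 2 * a - 1) / 4) * (p : ℝ) ^ (((a : ℝ) + 1) ^ 2 / 4) := by
    rw [← Real.rpow_add (by positivity)]; ring_nf
  have hspare : (p : ℝ) ^ (a - 1) ≤ (p : ℝ) ^ (((a : ℝ) ^ 2 - 2 * a - 1) / 4) := by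
    rw [← Real.rpow_natCast, Nat.cast_sub (by omega)]
    have ha' : (6 : ℝ) ≤ a := by exact_mod_cast ha
    exact Real.rpow_le_rpow_of_exponent_le hp1.le (by push_cast; nlinarith)
  have hcoef : (a : ℝ) + 1 ≤ 2 * (p : ℝ) ^ (a - 1) := by
    exact_mod_cast succ_le_two_mul_pow_pred hp a
  rw [hsplit, ← mul_assoc]
  gcongr
  linarith

lemma sum_gaussBinom_eq_Sfun {p : ℕ} (hp : 1 < p) {a : ℕ} (ha0 : 0 < a) (ha : a ≤ 5) :
    ∑ k ∈ range (a + 1), gaussBinom p a k = Sfun p a := by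
  have hp1 : (1 : ℝ) < p := by exact_mod_cast hp
  have hden (n : ℕ) (hn : n ≠ 0) : (p : ℝ) ^ n - 1 ≠ 0 := (sub_pos.mpr (one_lt_pow₀ hp1 hn)).ne'
  have := hden 2 two_ne_zero; have := hden 3 three_ne_zero
  have := hden 4 four_ne_zero; have := hden 5 (by norm_num)
  have : (p : ℝ) - 1 ≠ 0 := by simpa using hden 1 one_ne_zero
  interval_cases a <;>
  · simp only [sum_range_succ, sum_range_zero, gaussBinom, prod_range_succ, prod_range_zero, Sfun]
    norm_num
    field_simp
    ring

/-- For every prime `p` and `a ≥ 0`, `∑_{k=0}^{a} binom_p(a,k) ≤ S(p,a)`. -/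
theorem sum_gaussBinom_le_Sfun (p a : ℕ) (hp : p.Prime) :
    ∑ k ∈ Finset.range (a + 1), gaussBinom p a k ≤ Sfun p a := by
  have hp1 : 1 < p := hp.one_lt
  have hc : (2 : ℝ) ≤ 2.129 * Cprod p := by linarith [one_le_Cprod hp1]
  rcases Nat.lt_or_ge 5 a with ha | ha
  · have hS : Sfun p a = 2.129 * Cprod p * (p : ℝ) ^ ((a : ℝ) ^ 2 / 2) := by
      simp only [Sfun]; split_ifs <;> first | omega | rfl
    calc ∑ k ∈ range (a + 1), gaussBinom p a k
        ≤ ((a : ℝ) + 1) * (p : ℝ) ^ (((a : ℝ) + 1) ^ 2 / 4) := sum_gaussBinom_le_succ_mul_rpow hp1 a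
      _ ≤ 2 * (p : ℝ) ^ ((a : ℝ) ^ 2 / 2) := succ_mul_rpow_le_two_mul_rpow hp1 ha
      _ ≤ Sfun p a := by rw [hS]; gcongr
  · rcases Nat.eq_zero_or_pos a with rfl | ha0
    · simpa [Sfun, gaussBinom] using one_le_two.trans hc
    · exact (sum_gaussBinom_eq_Sfun hp1 ha0 ha).le
end
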